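/- Let ((J_k, K_k, L_k))_{k≥1} be an i.i.d. sequence of triples of real random variables with J_k > 0 a.s., K_k ≥ 0 a.s., L_k > 0 a.s., E[L₁] < ∞, E[log J₁] < 0 and E[log⁺ K₁] < ∞. Define τ_0 = 0, τ_n = L_1 + ⋯ + L_n, g_t = sup{n ≥ 0 : τ_n ≤ t}, and S̃_n := Σ_{k=1}^{n} (∏_{i=k+1}^{n} J_i)² K_k. Then S̃_{g_t} converges in distribution, as t → ∞, to S_∞ := Σ_{k=1}^{∞} (∏_{i=1}^{k-1} J_i²) K_k (which converges almost surely to a finite limit). -/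

import Mathlib

open MeasureTheory ProbabilityTheory Filter Topology

/-- The renewal counting variable `g_t = sup { n : τ_n ≤ t }` where
`τ_n = L_1 + ⋯ + L_n` (with `τ_0 = 0`); here `L k` denotes the paper's `L_{k+1}`. -/
noncomputable def renewalCount (L : ℕ → ℝ) (t : ℝ) : ℕ :=
  sSup {n : ℕ | ∑ k ∈ Finset.range n, L k ≤ t}

/-!
Reversing the first `n` triples is a permutation of an i.i.d. sequence, so it preserves the
joint law. It leaves `τ_m` unchanged for `m ≥ n`, hence also the event `{g_t = n}`, and it turns
the backward sum `S̃_n` into the forward partial sum `S_n = ∑_{k<n} (∏_{i<k} J_i²) K_k`.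
Splitting according to the value of `g_t` therefore gives `E f(S̃_{g_t}) = E f(S_{g_t})` for
every `t`. By the strong law, `(1/n) ∑_{i<n} log J_i → E log J < 0` and `log⁺ K_n = o(n)`, so the
terms of `S_∞` decay geometrically; also `τ_n → ∞`, hence `g_t → ∞`, `S_{g_t} → S_∞` a.s., and
dominated convergence concludes.
-/

open Finset

section IIDSequence

variable {ι Ω E : Type*} [MeasurableSpace Ω] [MeasurableSpace E]

lemma MeasureTheory.Measure.infinitePi_map_comp_perm (ν : Measure E) [IsProbabilityMeasure ν]
    (σ : Equiv.Perm ι) :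
    (Measure.infinitePi fun _ : ι => ν).map (fun x i => x (σ i)) =
      Measure.infinitePi fun _ => ν := by
  convert Measure.infinitePi_map_piCongrLeft (fun _ : ι => ν) σ.symm using 2
  ext x i
  rw [MeasurableEquiv.coe_piCongrLeft, Equiv.piCongrLeft_apply]
  simp

lemma ProbabilityTheory.iIndepFun.identDistrib_comp_perm {μ : Measure Ω} [IsProbabilityMeasure μ]
    {X : ι → Ω → E} (hX : ∀ i, Measurable (X i)) (hindep : iIndepFun X μ) {i₀ : ι}
    (hident : ∀ i, IdentDistrib (X i) (X i₀) μ μ) (σ : Equiv.Perm ι) :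
    IdentDistrib (fun ω i => X (σ i) ω) (fun ω i => X i ω) μ μ := by
  have hXv : Measurable fun ω i => X i ω := measurable_pi_lambda _ hX
  have hσ : Measurable fun (x : ι → E) i => x (σ i) := by fun_prop
  have hlaw : μ.map (fun ω i => X i ω) = Measure.infinitePi fun _ => μ.map (X i₀) := by
    rw [hindep.map_fun_eq_infinitePi_map hX]
    simp_rw [(hident _).map_eq]
  have := Measure.isProbabilityMeasure_map (μ := μ) (hX i₀).aemeasurable
  refine ⟨(hσ.comp hXv).aemeasurable, hXv.aemeasurable, ?_⟩
  change μ.map ((fun (x : ι → E) i => x (σ i)) ∘ fun ω i => X i ω) = _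
  rw [← Measure.map_map hσ hXv, hlaw, Measure.infinitePi_map_comp_perm]

lemma strong_law_ae_comp {μ : Measure Ω} {X : ℕ → Ω → E} (hindep : iIndepFun X μ)
    (hident : ∀ i, IdentDistrib (X i) (X 0) μ μ)
    {φ : E → ℝ} (hφ : Measurable φ) (hint : Integrable (fun ω => φ (X 0 ω)) μ) :
    ∀ᵐ ω ∂μ, Tendsto (fun n : ℕ => (∑ i ∈ range n, φ (X i ω)) / n) atTop
      (𝓝 (∫ ω, φ (X 0 ω) ∂μ)) :=
  strong_law_ae_real (fun i ω => φ (X i ω)) hint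
    (fun _ _ hij => (hindep.indepFun hij).comp hφ hφ) fun i => (hident i).comp hφ

end IIDSequence

lemma measurable_apply_nat_index {Ω β : Type*} [MeasurableSpace Ω] [MeasurableSpace β]
    {N : Ω → ℕ} (hN : Measurable N) {F : ℕ → Ω → β} (hF : ∀ n, Measurable (F n)) :
    Measurable fun ω => F (N ω) ω :=
  (measurable_from_prod_countable_left (f := fun p : Ω × ℕ => F p.2 p.1) hF).comp
    (measurable_id.prodMk hN)

lemma integral_eq_tsum_setIntegral_fiber {Ω E : Type*} [MeasurableSpace Ω]
    [NormedAddCommGroup E] [NormedSpace ℝ E] {μ : Measure Ω} {N : Ω → ℕ} (hN : Measurable N)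
    (F : ℕ → Ω → E) (hF : Integrable (fun ω => F (N ω) ω) μ) :
    ∫ ω, F (N ω) ω ∂μ = ∑' n, ∫ ω in N ⁻¹' {n}, F n ω ∂μ := by
  have hfib : ∀ n, MeasurableSet (N ⁻¹' {n}) := fun n => hN (measurableSet_singleton n)
  calc ∫ ω, F (N ω) ω ∂μ = ∫ ω in ⋃ n, N ⁻¹' {n}, F (N ω) ω ∂μ := by
        rw [← Set.preimage_iUnion, Set.iUnion_of_singleton, Set.preimage_univ, setIntegral_univ]
    _ = ∑' n, ∫ ω in N ⁻¹' {n}, F (N ω) ω ∂μ :=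
        integral_iUnion hfib (fun a b hab => (Set.disjoint_singleton.2 hab).preimage N)
          hF.integrableOn
    _ = ∑' n, ∫ ω in N ⁻¹' {n}, F n ω ∂μ :=
        tsum_congr fun n => setIntegral_congr_fun (hfib n) fun ω hω => by rw [hω]

lemma integral_pos_of_ae_pos {Ω : Type*} [MeasurableSpace Ω] {μ : Measure Ω} [NeZero μ]
    {f : Ω → ℝ} (hpos : ∀ᵐ ω ∂μ, 0 < f ω) (hint : Integrable f μ) : 0 < ∫ ω, f ω ∂μ := by
  refine (integral_pos_iff_support_of_nonneg_ae (hpos.mono fun ω h => h.le) hint).2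
    (pos_iff_ne_zero.2 fun h0 => ?_)
  have : ∀ᵐ ω ∂μ, False := by
    filter_upwards [hpos, measure_eq_zero_iff_ae_notMem.1 h0] with ω h1 h2
    exact h2 h1.ne'
  exact NeZero.ne μ (by simpa using this)

def reverseBelow (n : ℕ) : Equiv.Perm ℕ :=
  Function.Involutive.toPerm (fun k => if k < n then n - 1 - k else k) fun k => by
    dsimp only; split_ifs <;> omega

lemma reverseBelow_of_lt {n k : ℕ} (h : k < n) : reverseBelow n k = n - 1 - k := if_pos h

lemma reverseBelow_of_le {n k : ℕ} (h : n ≤ k) : reverseBelow n k = k := if_neg (by omega)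

lemma sum_range_comp_reverseBelow {M : Type*} [AddCommMonoid M] (f : ℕ → M) {n m : ℕ}
    (h : n ≤ m) : ∑ k ∈ range m, f (reverseBelow n k) = ∑ k ∈ range m, f k :=
  (reverseBelow n).sum_comp _ f fun k hk => by
    by_contra hkm
    exact hk (reverseBelow_of_le (by simp at hkm; omega))

noncomputable def backwardSum (J K : ℕ → ℝ) (n : ℕ) : ℝ :=
  ∑ k ∈ range n, (∏ i ∈ Ico (k + 1) n, J i) ^ 2 * K k

lemma backwardSum_comp_reverseBelow (J K : ℕ → ℝ) (n : ℕ) :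
    backwardSum (J ∘ reverseBelow n) (K ∘ reverseBelow n) n =
      ∑ k ∈ range n, (∏ i ∈ range k, J i ^ 2) * K k := by
  rw [← sum_range_reflect, backwardSum]
  refine sum_congr rfl fun k hk => ?_
  have hkn := mem_range.1 hk
  have hprod : ∏ i ∈ Ico (k + 1) n, J (reverseBelow n i) = ∏ i ∈ range (n - 1 - k), J i := by
    rw [prod_congr rfl fun i hi => congrArg J (reverseBelow_of_lt (mem_Ico.1 hi).2),
      prod_Ico_reflect J (k + 1) (by omega : n ≤ n - 1 + 1), ← Nat.Ico_zero_eq_range]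
    congr 2 <;> omega
  simp only [Function.comp_apply, hprod, reverseBelow_of_lt hkn, prod_pow]

section Renewal

variable {L : ℕ → ℝ} {t : ℝ}

lemma renewalCount_eq_succ_iff {n : ℕ} :
    renewalCount L t = n + 1 ↔
      ∑ k ∈ range (n + 1), L k ≤ t ∧ ∀ m, n + 1 < m → t < ∑ k ∈ range m, L k := by
  set S := {m : ℕ | ∑ k ∈ range m, L k ≤ t}
  change sSup S = n + 1 ↔ _
  constructor
  · intro h
    have hbdd : BddAbove S := by
      by_contra hb
      rw [Nat.sSup_of_not_bddAbove hb] at h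
      omega
    have hne : S.Nonempty := by
      by_contra hne
      simp [Set.not_nonempty_iff_eq_empty.1 hne] at h
    refine ⟨h ▸ Nat.sSup_mem hne hbdd, fun m hm => ?_⟩
    by_contra! hmS
    have : m ≤ sSup S := le_csSup hbdd hmS
    omega
  · rintro ⟨hn, hgt⟩
    exact IsGreatest.csSup_eq ⟨hn, fun m hm => by
      by_contra! h
      exact (hgt m h).not_ge hm⟩

lemma renewalCount_eq_iff_of_sum_eq {L' : ℕ → ℝ} {n : ℕ}
    (h : ∀ m, n ≤ m → ∑ k ∈ range m, L' k = ∑ k ∈ range m, L k) :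
    renewalCount L' t = n ↔ renewalCount L t = n := by
  cases n with
  | zero => simp only [renewalCount, h _ (Nat.zero_le _)]
  | succ n =>
    simp only [renewalCount_eq_succ_iff, h _ le_rfl]
    exact and_congr_right' (forall_congr' fun m => imp_congr_right fun hm => by rw [h m hm.le])

lemma measurable_renewalCount (t : ℝ) : Measurable fun L : ℕ → ℝ => renewalCount L t := by
  have hsucc : ∀ n, MeasurableSet ((fun L : ℕ → ℝ => renewalCount L t) ⁻¹' {n + 1}) := by
    intro n
    simp only [Set.preimage, Set.mem_singleton_iff, renewalCount_eq_succ_iff]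
    refine measurableSet_setOfPred.2 (Measurable.and ?_ (Measurable.forall fun m => ?_))
    · exact measurableSet_setOfPred.1 (measurableSet_le (by fun_prop) measurable_const)
    · exact Measurable.imp measurable_const
        (measurableSet_setOfPred.1 (measurableSet_lt measurable_const (by fun_prop)))
  refine measurable_to_countable' fun n => ?_
  cases n with
  | succ n => exact hsucc n
  | zero =>
    have : (fun L : ℕ → ℝ => renewalCount L t) ⁻¹' {0} =
        (⋃ n, (fun L : ℕ → ℝ => renewalCount L t) ⁻¹' {n + 1})ᶜ := by
      ext L
      simp only [Set.mem_preimage, Set.mem_singleton_iff, Set.mem_compl_iff, Set.mem_iUnion]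
      constructor
      · rintro h ⟨n, hn⟩; omega
      · intro h; by_contra h0; exact h ⟨_, (Nat.succ_pred_eq_of_ne_zero h0).symm⟩
    rw [this]
    exact (MeasurableSet.iUnion hsucc).compl

lemma le_renewalCount (hL : Tendsto (fun m => ∑ k ∈ range m, L k) atTop atTop) {N : ℕ}
    (hN : ∑ k ∈ range N, L k ≤ t) : N ≤ renewalCount L t := by
  obtain ⟨M, hM⟩ := (hL.eventually_gt_atTop t).exists_forall_of_atTop
  exact le_csSup ⟨M, fun m hm => by by_contra! h; exact (hM m h.le).not_ge hm⟩ hN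

lemma tendsto_renewalCount (hL : Tendsto (fun m => ∑ k ∈ range m, L k) atTop atTop) :
    Tendsto (renewalCount L) atTop atTop :=
  tendsto_atTop.2 fun _ => (eventually_ge_atTop _).mono fun _ => le_renewalCount hL

end Renewal

lemma tendsto_div_of_tendsto_avg {W : ℕ → ℝ} {c : ℝ}
    (h : Tendsto (fun n : ℕ => (∑ i ∈ range n, W i) / n) atTop (𝓝 c)) :
    Tendsto (fun n : ℕ => W n / n) atTop (𝓝 0) := by
  -- `W n / n = (1 + 1 / n) * A (n + 1) - A n`, where `A n` is the average of `W 0, …, W (n - 1)`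
  have hlim := (((tendsto_const_nhds (x := (1 : ℝ))).add tendsto_one_div_atTop_nhds_zero_nat).mul
    (h.comp (tendsto_add_atTop_nat 1))).sub h
  rw [add_zero, one_mul, sub_self] at hlim
  refine hlim.congr' ((eventually_ge_atTop 1).mono fun n hn => ?_)
  have : (n : ℝ) ≠ 0 := by positivity
  simp only [Function.comp_apply, sum_range_succ, Nat.cast_add, Nat.cast_one]
  field_simp
  ring

lemma summable_prod_sq_mul_of_tendsto_avg_log {J K : ℕ → ℝ} (hJ : ∀ k, 0 < J k)
    (hK : ∀ k, 0 ≤ K k) {m : ℝ} (hm : m < 0)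
    (hlogJ : Tendsto (fun n : ℕ => (∑ i ∈ range n, Real.log (J i)) / n) atTop (𝓝 m))
    (hlogK : Tendsto (fun n : ℕ => Real.log (max (K n) 1) / n) atTop (𝓝 0)) :
    Summable fun k => (∏ i ∈ range k, J i ^ 2) * K k := by
  set e : ℕ → ℝ := fun n => 2 * ∑ i ∈ range n, Real.log (J i) + Real.log (max (K n) 1)
  have hterm : ∀ n, (∏ i ∈ range n, J i ^ 2) * K n ≤ Real.exp (e n) := fun n => by
    have hprod : ∏ i ∈ range n, J i ^ 2 = Real.exp (2 * ∑ i ∈ range n, Real.log (J i)) := by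
      rw [mul_sum, Real.exp_sum]
      refine prod_congr rfl fun i _ => ?_
      rw [← Real.exp_log (hJ i), ← Real.exp_nat_mul, Real.log_exp]
      norm_num
    rw [Real.exp_add, ← hprod, Real.exp_log (one_pos.trans_le (le_max_right _ _))]
    gcongr
    exact le_max_left _ _
  have he : Tendsto (fun n : ℕ => e n / n) atTop (𝓝 (2 * m)) := by
    simpa [e, add_div, mul_div_assoc] using (hlogJ.const_mul 2).add hlogK
  have hgeo : ∀ᶠ n : ℕ in atTop, Real.exp (e n) ≤ Real.exp m ^ n := by
    filter_upwards [(tendsto_order.1 he).2 m (by linarith), eventually_ge_atTop 1]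
      with n hn hn1
    rw [← Real.exp_nat_mul, Real.exp_le_exp]
    rw [div_lt_iff₀ (by positivity)] at hn
    linarith
  refine Summable.of_norm_bounded_eventually_nat
    (summable_geometric_of_lt_one (Real.exp_pos m).le (Real.exp_lt_one_iff.2 hm)) ?_
  filter_upwards [hgeo] with n hn
  rw [Real.norm_of_nonneg (mul_nonneg (prod_nonneg fun i _ => sq_nonneg _) (hK n))]
  exact (hterm n).trans hn

section RenewalSums

variable {Ω : Type*} [MeasurableSpace Ω] {μ : Measure Ω} [IsProbabilityMeasure μ]
  {J K L : ℕ → Ω → ℝ}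

lemma integrable_comp_renewalCount (hL : ∀ k, Measurable (L k))
    (f : BoundedContinuousFunction ℝ ℝ) (S : ℕ → Ω → ℝ) (hS : ∀ n, Measurable (S n)) (t : ℝ) :
    Integrable (fun ω => f (S (renewalCount (L · ω) t) ω)) μ :=
  .of_bound (f.continuous.measurable.comp (measurable_apply_nat_index
      ((measurable_renewalCount t).comp (measurable_pi_lambda _ hL)) hS)).aestronglyMeasurable
    ‖f‖ (ae_of_all _ fun _ => f.norm_coe_le_norm _)

lemma setIntegral_renewalCount_backwardSum_eq
    (hmeas : ∀ k, Measurable fun ω => (J k ω, K k ω, L k ω))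
    (hindep : iIndepFun (fun k ω => (J k ω, K k ω, L k ω)) μ)
    (hident : ∀ k, IdentDistrib (fun ω => (J k ω, K k ω, L k ω))
      (fun ω => (J 0 ω, K 0 ω, L 0 ω)) μ μ)
    {f : ℝ → ℝ} (hf : Measurable f) (t : ℝ) (n : ℕ) :
    ∫ ω in {ω | renewalCount (L · ω) t = n}, f (backwardSum (J · ω) (K · ω) n) ∂μ =
      ∫ ω in {ω | renewalCount (L · ω) t = n},
        f (∑ k ∈ range n, (∏ i ∈ range k, J i ω ^ 2) * K k ω) ∂μ := by
  set A : Set (ℕ → ℝ × ℝ × ℝ) := {z | renewalCount (fun i => (z i).2.2) t = n}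
  have hA : MeasurableSet A :=
    (measurable_renewalCount t).comp (by fun_prop) (measurableSet_singleton n)
  set Φ := A.indicator fun z => f (backwardSum (fun i => (z i).1) (fun i => (z i).2.1) n)
  have hΦ : Measurable Φ := by
    refine (hf.comp ?_).indicator hA
    unfold backwardSum
    fun_prop
  have hexch := ((hindep.identDistrib_comp_perm hmeas hident (reverseBelow n)).comp hΦ).integral_eq
  have hB : MeasurableSet {ω | renewalCount (L · ω) t = n} :=
    (measurable_renewalCount t).comp (measurable_pi_lambda _ fun k => (hmeas k).snd.snd)
      (measurableSet_singleton n)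
  rw [← integral_indicator hB, ← integral_indicator hB]
  convert hexch.symm using 2
  · rfl
  · funext ω
    have hcount := renewalCount_eq_iff_of_sum_eq (L := (L · ω)) (L' := (L · ω) ∘ reverseBelow n)
      (t := t) fun m hm => sum_range_comp_reverseBelow (L · ω) hm
    simp only [Function.comp_apply, Φ, A, Set.indicator_apply, Set.mem_ofPred_eq]
    rw [← backwardSum_comp_reverseBelow]
    exact if_congr hcount.symm rfl rfl

lemma integral_backwardSum_renewalCount_eq
    (hmeas : ∀ k, Measurable fun ω => (J k ω, K k ω, L k ω))
    (hindep : iIndepFun (fun k ω => (J k ω, K k ω, L k ω)) μ)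
    (hident : ∀ k, IdentDistrib (fun ω => (J k ω, K k ω, L k ω))
      (fun ω => (J 0 ω, K 0 ω, L 0 ω)) μ μ)
    (f : BoundedContinuousFunction ℝ ℝ) (t : ℝ) :
    ∫ ω, f (backwardSum (J · ω) (K · ω) (renewalCount (L · ω) t)) ∂μ =
      ∫ ω, f (∑ k ∈ range (renewalCount (L · ω) t), (∏ i ∈ range k, J i ω ^ 2) * K k ω) ∂μ := by
  have hJ : ∀ k, Measurable (J k) := fun k => (hmeas k).fst
  have hK : ∀ k, Measurable (K k) := fun k => (hmeas k).snd.fst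
  have hL : ∀ k, Measurable (L k) := fun k => (hmeas k).snd.snd
  have hN : Measurable fun ω => renewalCount (L · ω) t :=
    (measurable_renewalCount t).comp (measurable_pi_lambda _ hL)
  rw [integral_eq_tsum_setIntegral_fiber hN (fun n ω => f (backwardSum (J · ω) (K · ω) n))
      (integrable_comp_renewalCount hL f (fun n ω => backwardSum (J · ω) (K · ω) n)
        (fun n => by unfold backwardSum; fun_prop) t),
    integral_eq_tsum_setIntegral_fiber hN
      (fun n ω => f (∑ k ∈ range n, (∏ i ∈ range k, J i ω ^ 2) * K k ω))
      (integrable_comp_renewalCount hL f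
        (fun n ω => ∑ k ∈ range n, (∏ i ∈ range k, J i ω ^ 2) * K k ω) (fun n => by fun_prop) t)]
  exact tsum_congr fun n =>
    setIntegral_renewalCount_backwardSum_eq hmeas hindep hident f.continuous.measurable t n

lemma tendsto_integral_forwardSum_renewalCount
    (hmeas : ∀ k, Measurable fun ω => (J k ω, K k ω, L k ω))
    (hτ : ∀ᵐ ω ∂μ, Tendsto (fun m => ∑ k ∈ range m, L k ω) atTop atTop)
    (hsum : ∀ᵐ ω ∂μ, Summable fun k => (∏ i ∈ range k, J i ω ^ 2) * K k ω)
    (f : BoundedContinuousFunction ℝ ℝ) :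
    Tendsto (fun t => ∫ ω,
        f (∑ k ∈ range (renewalCount (L · ω) t), (∏ i ∈ range k, J i ω ^ 2) * K k ω) ∂μ)
      atTop (𝓝 (∫ ω, f (∑' k, (∏ i ∈ range k, J i ω ^ 2) * K k ω) ∂μ)) := by
  have hJ : ∀ k, Measurable (J k) := fun k => (hmeas k).fst
  have hK : ∀ k, Measurable (K k) := fun k => (hmeas k).snd.fst
  refine tendsto_integral_filter_of_dominated_convergence (fun _ => ‖f‖)
    (.of_forall fun t => ?_) (.of_forall fun _ => ae_of_all _ fun _ => f.norm_coe_le_norm _)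
    (integrable_const _) ?_
  · exact (integrable_comp_renewalCount (fun k => (hmeas k).snd.snd) f
      (fun n ω => ∑ k ∈ range n, (∏ i ∈ range k, J i ω ^ 2) * K k ω)
      (fun n => by fun_prop) t).aestronglyMeasurable
  filter_upwards [hτ, hsum] with ω hτω hsumω
  exact (f.continuous.tendsto _).comp
    (hsumω.hasSum.tendsto_sum_nat.comp (tendsto_renewalCount hτω))

end RenewalSums

/-- Lean index `k` is the paper's index `k + 1`. -/
theorem stmt5 {Ω : Type*} [MeasurableSpace Ω] (μ : Measure Ω) [IsProbabilityMeasure μ]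
    (J K L : ℕ → Ω → ℝ)
    (hmeas : ∀ k, Measurable fun ω => (J k ω, K k ω, L k ω))
    (hindep : iIndepFun (fun k ω => (J k ω, K k ω, L k ω)) μ)
    (hident : ∀ k, IdentDistrib (fun ω => (J k ω, K k ω, L k ω))
      (fun ω => (J 0 ω, K 0 ω, L 0 ω)) μ μ)
    (hJpos : ∀ k, ∀ᵐ ω ∂μ, 0 < J k ω)
    (hKnonneg : ∀ k, ∀ᵐ ω ∂μ, 0 ≤ K k ω)
    (hLpos : ∀ k, ∀ᵐ ω ∂μ, 0 < L k ω)
    (hLint : Integrable (L 0) μ)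
    (hlogJint : Integrable (fun ω => Real.log (J 0 ω)) μ)
    (hlogJneg : ∫ ω, Real.log (J 0 ω) ∂μ < 0)
    (hlogKint : Integrable (fun ω => Real.log (max (K 0 ω) 1)) μ) :
    (∀ᵐ ω ∂μ, Summable fun k => (∏ i ∈ Finset.range k, (J i ω) ^ 2) * K k ω) ∧
    ∀ f : BoundedContinuousFunction ℝ ℝ,
      Tendsto (fun t : ℝ => ∫ ω,
          f (∑ k ∈ Finset.range (renewalCount (fun i => L i ω) t),
            (∏ i ∈ Finset.Ico (k + 1) (renewalCount (fun i => L i ω) t), J i ω) ^ 2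
              * K k ω) ∂μ)
        atTop
        (𝓝 (∫ ω, f (∑' k, (∏ i ∈ Finset.range k, (J i ω) ^ 2) * K k ω) ∂μ)) := by
  have hlawJ := strong_law_ae_comp hindep hident (φ := fun p => Real.log p.1)
    (by fun_prop) hlogJint
  have hlawK := strong_law_ae_comp hindep hident (φ := fun p => Real.log (max p.2.1 1))
    (by fun_prop) hlogKint
  have hlawL := strong_law_ae_comp hindep hident (φ := fun p => p.2.2) (by fun_prop) hLint
  have hτ : ∀ᵐ ω ∂μ, Tendsto (fun m => ∑ k ∈ range m, L k ω) atTop atTop := by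
    filter_upwards [hlawL] with ω h
    exact tendsto_natCast_atTop_atTop.num (integral_pos_of_ae_pos (hLpos 0) hLint) h
  have hsum : ∀ᵐ ω ∂μ, Summable fun k => (∏ i ∈ range k, J i ω ^ 2) * K k ω := by
    filter_upwards [ae_all_iff.2 hJpos, ae_all_iff.2 hKnonneg, hlawJ, hlawK] with ω hJ hK hlJ hlK
    exact summable_prod_sq_mul_of_tendsto_avg_log hJ hK hlogJneg hlJ
      (tendsto_div_of_tendsto_avg hlK)
  refine ⟨hsum, fun f => ?_⟩
  change Tendsto (fun t => ∫ ω, f (backwardSum (J · ω) (K · ω) (renewalCount (L · ω) t)) ∂μ) _ _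
  simp_rw [integral_backwardSum_renewalCount_eq hmeas hindep hident f]
  exact tendsto_integral_forwardSum_renewalCount hmeas hτ hsum f
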